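/- arXiv:2308.03330 — 5 statements merged into one kernel-verified Lean document; each statement's English description precedes it below -/
import Mathlib

section
/- Let q, k, r, n be natural numbers and write m = k + r. Let M₁ be a real (k+r) × q matrix, B₁ : Fin (k+r) → ℝ, M₂ a real n × (k+r) matrix, B₂ : Fin n → ℝ, and let I ⊆ (Fin q → ℝ) be a set of inputs. Denote by M₁ᵗ the top k rows of M₁ (the submatrix of M₁ on row indices Fin.castAdd r), B₁ᵗ the first k entries of B₁, M₂ˡ the left k columns of M₂, and by M₁ᵇ, B₁ᵇ, M₂ʳ the bottom r rows of M₁, last r entries of B₁, and right r columns of M₂ respectively. Suppose (stable activation) for every v ∈ I and every i : Fin k, (M₁ᵗ.mulVec v + B₁ᵗ) i ≥ 0, and suppose B : Fin n → ℝ satisfies, for every v ∈ I and every j : Fin n, ((M₂ˡ * M₁ᵗ).mulVec v + B) j ≥ 0. Then for every v ∈ I: M₂.mulVec (relu (M₁.mulVec v + B₁)) + B₂ = relu ((M₂ˡ * M₁ᵗ).mulVec v + B) + M₂ʳ.mulVec (relu (M₁ᵇ.mulVec v + B₁ᵇ)) + M₂ˡ.mulVec B₁ᵗ + B₂ - B.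 That is, the reduced block obtained by merging the k stably activated ReLU neurons into n new stably activated neurons computes exactly the same function as the original block on every input in I. -/
noncomputable def relu {ι : Type*} (x : ι → ℝ) : ι → ℝ := fun i => max (x i) 0

theorem stable_activated_merge
    (q k r n : ℕ)
    (M₁ : Matrix (Fin (k + r)) (Fin q) ℝ) (B₁ : Fin (k + r) → ℝ)
    (M₂ : Matrix (Fin n) (Fin (k + r)) ℝ) (B₂ : Fin n → ℝ)
    (I : Set (Fin q → ℝ)) (B : Fin n → ℝ)
    (hact : ∀ v ∈ I, ∀ i : Fin k,
      ((M₁.submatrix (Fin.castAdd r) id).mulVec v +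
        (fun i => B₁ (Fin.castAdd r i))) i ≥ 0)
    (hB : ∀ v ∈ I, ∀ j : Fin n,
      ((M₂.submatrix id (Fin.castAdd r) * M₁.submatrix (Fin.castAdd r) id).mulVec v + B) j ≥ 0) :
    ∀ v ∈ I,
      M₂.mulVec (relu (M₁.mulVec v + B₁)) + B₂ =
        relu ((M₂.submatrix id (Fin.castAdd r) * M₁.submatrix (Fin.castAdd r) id).mulVec v + B)
        + (M₂.submatrix id (Fin.natAdd k)).mulVec
            (relu ((M₁.submatrix (Fin.natAdd k) id).mulVec v +
              (fun i => B₁ (Fin.natAdd k i))))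
        + (M₂.submatrix id (Fin.castAdd r)).mulVec (fun i => B₁ (Fin.castAdd r i))
        + B₂ - B := by
  intro v hv
  funext j
  have h1 : ∀ i : Fin k,
      max ((M₁.mulVec v + B₁) (Fin.castAdd r i)) 0
        = (M₁.mulVec v + B₁) (Fin.castAdd r i) := fun i => max_eq_left (hact v hv i)
  have h2 : max (((M₂.submatrix id (Fin.castAdd r) * M₁.submatrix (Fin.castAdd r) id).mulVec v + B) j) 0
      = ((M₂.submatrix id (Fin.castAdd r) * M₁.submatrix (Fin.castAdd r) id).mulVec v + B) j :=
    max_eq_left (hB v hv j)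
  simp only [relu, Matrix.mulVec, dotProduct, Matrix.mul_apply, Matrix.submatrix_apply,
    id_eq, Pi.add_apply, Pi.sub_apply, Fin.sum_univ_add] at h1 h2 ⊢
  rw [h2, Finset.sum_congr rfl (fun i _ => by rw [h1 i])]
  simp only [mul_add, Finset.mul_sum, Finset.sum_mul, Finset.sum_add_distrib, mul_assoc]
  rw [Finset.sum_comm]
  ring
end

section
/- Let q, m, n be natural numbers, M₁ a real m × q matrix, B₁ : Fin m → ℝ, M₂ a real n × m matrix, I ⊆ (Fin q → ℝ), and S a finite set of indices in Fin m such that for every v ∈ I and every i ∈ S, (M₁.mulVec v + B₁) i ≤ 0 (i.e., every ReLU neuron with index in S is stably deactivated with respect to I). Let T = {i : Fin m // i ∉ S} and let M₁' = M₁.submatrix Subtype.val id (the rows of M₁ outside S), B₁' i = B₁ i.val for i : T, and M₂' = M₂.submatrix id Subtype.val (the columns of M₂ outside S). Then for every v ∈ I: M₂.mulVec (relu (M₁.mulVec v + B₁)) = M₂'.mulVec (relu (M₁'.mulVec v + B₁')). That is, stably deactivated ReLU neurons can be deleted from the network without changing its output on I. -/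
theorem stable_deactivated_deletion
    (q m n : ℕ)
    (M₁ : Matrix (Fin m) (Fin q) ℝ) (B₁ : Fin m → ℝ)
    (M₂ : Matrix (Fin n) (Fin m) ℝ)
    (I : Set (Fin q → ℝ)) (S : Finset (Fin m))
    (hS : ∀ v ∈ I, ∀ i ∈ S, (M₁.mulVec v + B₁) i ≤ 0) :
    ∀ v ∈ I,
      M₂.mulVec (relu (M₁.mulVec v + B₁)) =
        (M₂.submatrix id (Subtype.val : {i : Fin m // i ∉ S} → Fin m)).mulVec
          (relu ((M₁.submatrix (Subtype.val : {i : Fin m // i ∉ S} → Fin m) id).mulVec v +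
            (fun i : {i : Fin m // i ∉ S} => B₁ i.val))) := by
  intro v hv
  funext j
  simp only [Matrix.mulVec, dotProduct, Matrix.submatrix_apply, id_eq, relu]
  have hR : ∑ x : {i // i ∉ S},
      M₂ j x.val * (((M₁.submatrix (Subtype.val : {i : Fin m // i ∉ S} → Fin m) id).mulVec v + fun i : {i : Fin m // i ∉ S} => B₁ i.val) x ⊔ 0)
      = ∑ x : {i // i ∉ S}, M₂ j x.val * ((M₁.mulVec v + B₁) x.val ⊔ 0) := by
    refine Finset.sum_congr rfl fun x _ => ?_
    simp [Matrix.mulVec, dotProduct]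
  rw [hR, ← Finset.sum_subtype Sᶜ (fun i => Finset.mem_compl) 
      (fun i => M₂ j i * max ((M₁.mulVec v + B₁) i) 0),
    ← Finset.sum_filter_add_sum_filter_not Finset.univ (fun i => i ∈ Sᶜ)]
  have h0 : ∀ i ∈ Finset.univ.filter (fun i => ¬ i ∈ Sᶜ),
      M₂ j i * max ((M₁.mulVec v + B₁) i) 0 = 0 := by
    intro i hi
    simp only [Finset.mem_filter, Finset.mem_compl, not_not] at hi
    have := hS v hv i hi.2
    rw [max_eq_right this, mul_zero]
  rw [Finset.sum_eq_zero h0, add_zero, Finset.filter_mem_eq_inter, Finset.univ_inter]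
end

section
/- Let q, m, n be natural numbers, M₁ a real m × q matrix, B₁ : Fin m → ℝ, M₂ a real n × m matrix, B₂ : Fin n → ℝ, and I ⊆ (Fin q → ℝ). Let S⁺ and S⁻ be disjoint finite sets of indices in Fin m such that for every v ∈ I: (M₁.mulVec v + B₁) i ≥ 0 for all i ∈ S⁺ (stably activated neurons) and (M₁.mulVec v + B₁) i ≤ 0 for all i ∈ S⁻ (stably deactivated neurons). Let U = {i : Fin m // i ∉ S⁺ ∧ i ∉ S⁻} and A = {i : Fin m // i ∈ S⁺}, with the corresponding row-submatrices M₁ᴬ = M₁.submatrix Subtype.val id, M₁ᵁ = M₁.submatrix Subtype.val id, bias restrictions B₁ᴬ, B₁ᵁ, and column-submatrices M₂ᴬ = M₂.submatrix id Subtype.val, M₂ᵁ = M₂.submatrix id Subtype.val. Then for every v ∈ I: M₂.mulVec (relu (M₁.mulVec v + B₁)) + B₂ = (M₂ᴬ * M₁ᴬ).mulVec v + M₂ᴬ.mulVec B₁ᴬ + M₂ᵁ.mulVec (relu (M₁ᵁ.mulVec v + B₁ᵁ)) + B₂. That is, deleting the stably deactivated neurons and replacing the stably activated neurons by a direct affine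 connection preserves the block's output on all of I. -/
theorem Matrix.mulVec_ite_zero {m n α : Type*} [Fintype n] [NonUnitalNonAssocSemiring α]
    (M : Matrix m n α) (p : n → Prop) [DecidablePred p] [Fintype {j // p j}] (x : n → α) :
    M.mulVec (fun j => if p j then x j else 0) =
      (M.submatrix id (Subtype.val : {j // p j} → n)).mulVec fun j => x j := by
  ext i
  simp only [Matrix.mulVec, dotProduct, mul_ite, mul_zero, Finset.sum_ite, Finset.sum_const_zero,
    add_zero, Matrix.submatrix_apply, id_eq]
  exact Finset.sum_subtype _ Finset.mem_filter_univ _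

theorem relu_eq_add_of_stable {ι : Type*} {w : ι → ℝ} {P N : ι → Prop}
    [DecidablePred P] [DecidablePred N]
    (hP : ∀ i, P i → w i ≥ 0) (hN : ∀ i, N i → w i ≤ 0) :
    relu w = (fun i => if P i then w i else 0) +
      fun i => if ¬P i ∧ ¬N i then relu w i else 0 := by
  ext i
  by_cases hPi : P i
  · simp [hPi, relu, hP i hPi]
  by_cases hNi : N i
  · simp [hPi, hNi, relu, hN i hNi]
  · simp [hPi, hNi]

theorem stable_neuron_reduction_general
    (q m n : ℕ)
    (M₁ : Matrix (Fin m) (Fin q) ℝ) (B₁ : Fin m → ℝ)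
    (M₂ : Matrix (Fin n) (Fin m) ℝ) (B₂ : Fin n → ℝ)
    (I : Set (Fin q → ℝ))
    (Sp Sm : Finset (Fin m))
    (hp : ∀ v ∈ I, ∀ i ∈ Sp, (M₁.mulVec v + B₁) i ≥ 0)
    (hm : ∀ v ∈ I, ∀ i ∈ Sm, (M₁.mulVec v + B₁) i ≤ 0) :
    ∀ v ∈ I,
      M₂.mulVec (relu (M₁.mulVec v + B₁)) + B₂ =
        ((M₂.submatrix id (Subtype.val : {i : Fin m // i ∈ Sp} → Fin m)) *
          (M₁.submatrix (Subtype.val : {i : Fin m // i ∈ Sp} → Fin m) id)).mulVec v +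
        (M₂.submatrix id (Subtype.val : {i : Fin m // i ∈ Sp} → Fin m)).mulVec
          (fun i : {i : Fin m // i ∈ Sp} => B₁ i.val) +
        (M₂.submatrix id (Subtype.val : {i : Fin m // i ∉ Sp ∧ i ∉ Sm} → Fin m)).mulVec
          (relu ((M₁.submatrix (Subtype.val : {i : Fin m // i ∉ Sp ∧ i ∉ Sm} → Fin m) id).mulVec v +
            (fun i : {i : Fin m // i ∉ Sp ∧ i ∉ Sm} => B₁ i.val))) +
        B₂ := by
  intro v hv
  rw [relu_eq_add_of_stable (hp v hv) (hm v hv), Matrix.mulVec_add, Matrix.mulVec_ite_zero,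
    Matrix.mulVec_ite_zero, ← Matrix.mulVec_mulVec, ← Matrix.mulVec_add]
  rfl

theorem stable_neuron_reduction
    (q m n : ℕ)
    (M₁ : Matrix (Fin m) (Fin q) ℝ) (B₁ : Fin m → ℝ)
    (M₂ : Matrix (Fin n) (Fin m) ℝ) (B₂ : Fin n → ℝ)
    (I : Set (Fin q → ℝ))
    (Sp Sm : Finset (Fin m)) (hdisj : Disjoint Sp Sm)
    (hp : ∀ v ∈ I, ∀ i ∈ Sp, (M₁.mulVec v + B₁) i ≥ 0)
    (hm : ∀ v ∈ I, ∀ i ∈ Sm, (M₁.mulVec v + B₁) i ≤ 0) :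
    ∀ v ∈ I,
      M₂.mulVec (relu (M₁.mulVec v + B₁)) + B₂ =
        ((M₂.submatrix id (Subtype.val : {i : Fin m // i ∈ Sp} → Fin m)) *
          (M₁.submatrix (Subtype.val : {i : Fin m // i ∈ Sp} → Fin m) id)).mulVec v +
        (M₂.submatrix id (Subtype.val : {i : Fin m // i ∈ Sp} → Fin m)).mulVec
          (fun i : {i : Fin m // i ∈ Sp} => B₁ i.val) +
        (M₂.submatrix id (Subtype.val : {i : Fin m // i ∉ Sp ∧ i ∉ Sm} → Fin m)).mulVec
          (relu ((M₁.submatrix (Subtype.val : {i : Fin m // i ∉ Sp ∧ i ∉ Sm} → Fin m) id).mulVec v +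
            (fun i : {i : Fin m // i ∉ Sp ∧ i ∉ Sm} => B₁ i.val))) +
        B₂ :=
  stable_neuron_reduction_general q m n M₁ B₁ M₂ B₂ I Sp Sm hp hm
end

section
/- Let p, r, n be natural numbers, Mˡ a real matrix with rows indexed by Fin n and columns indexed by Fin p ⊕ Fin r, Bˡ : Fin n → ℝ, and Bₚ : Fin p → ℝ. Let a : Fin p → ℝ and c : Fin r → ℝ be arbitrary vectors with a i + Bₚ i ≥ 0 for every i : Fin p, and let B : Fin p ⊕ Fin r → ℝ be B = Sum.elim Bₚ 0. Then: Mˡ.mulVec (relu (Sum.elim a c + B)) + (Bˡ - Mˡ.mulVec B) = Mˡ.mulVec (Sum.elim a (relu c)) + Bˡ. That is, in the Linear layer construction, passing the concatenation of the (bias-shifted, hence nonnegative) outputs a of the non-blocked preceding layers and the pre-activations c of the blocked ReLU layers through a single new ReLU layer, then applying the weight Mˡ with bias Bˡ − Mˡ·B, computes exactly the original output Mˡ·(a ⊕ relu c) + Bˡ; hence Linear layer construction does not change the functionality of the network. -/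
theorem linear_layer_construction
    (p r n : ℕ)
    (Ml : Matrix (Fin n) (Fin p ⊕ Fin r) ℝ) (Bl : Fin n → ℝ)
    (Bp : Fin p → ℝ) (a : Fin p → ℝ) (c : Fin r → ℝ)
    (h : ∀ i : Fin p, a i + Bp i ≥ 0) :
    Ml.mulVec (relu (Sum.elim a c + Sum.elim Bp 0)) + (Bl - Ml.mulVec (Sum.elim Bp 0)) =
      Ml.mulVec (Sum.elim a (relu c)) + Bl := by
  have key : relu (Sum.elim a c + Sum.elim Bp 0) =
      Sum.elim a (relu c) + Sum.elim Bp 0 := by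
    funext i
    cases i with
    | inl i => simp [relu, max_eq_left (h i)]
    | inr i => simp [relu]
  rw [key, Matrix.mulVec_add]
  abel
end

section
/- Let V be a finite type and E : V → V → Prop a directed edge relation that is acyclic, in the sense that there is no vertex v with Relation.TransGen E v v. Suppose there is a vertex o such that every vertex has a directed path to o (for every v : V, Relation.ReflTransGen E v o). Let L : V be a vertex such that (i) L has at least one in-neighbor (there exists v with E v L), and (ii) every vertex w strictly reachable from L (i.e., with Relation.TransGen E L w) has at most one in-neighbor: for all such w and all u₁ u₂, if E u₁ w and E u₂ w then u₁ = u₂. Then there exists an in-neighbor v of L whose only out-neighbor is L: there exists v with E v L and, for every w, E v w implies w = L. (This is the graph-theoretic content of the lemma stating that if the last SumLinear block L has more than one preceding layer and all layers behind L have at most one preceding layer, then some ReLU layer in in(L) is blocked by L.) -/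
theorem blocked_relu_exists
    {V : Type*} [Fintype V] (E : V → V → Prop)
    (hacyc : ∀ v : V, ¬ Relation.TransGen E v v)
    (o : V) (ho : ∀ v : V, Relation.ReflTransGen E v o)
    (L : V) (hin : ∃ v : V, E v L)
    (hone : ∀ w : V, Relation.TransGen E L w →
      ∀ u₁ u₂ : V, E u₁ w → E u₂ w → u₁ = u₂) :
    ∃ v : V, E v L ∧ ∀ w : V, E v w → w = L := by
  classical
  -- Dichotomy: every vertex reaches L, or is strictly after L.
  have dich : ∀ w : V, Relation.ReflTransGen E w L ∨ Relation.TransGen E L w := by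
    intro w
    induction (ho w) using Relation.ReflTransGen.head_induction_on with
    | refl =>
      by_cases h : L = o
      · exact Or.inl (h ▸ Relation.ReflTransGen.refl)
      · rcases (ho L).cases_head with h' | ⟨c, hc, hc'⟩
        · exact absurd h' h
        · exact Or.inr (Relation.TransGen.head' hc hc')
    | head hwx _ ih =>
      rename_i w' x _
      rcases ih with h | h
      · exact Or.inl (Relation.ReflTransGen.head hwx h)
      · -- x is strictly after L; its in-neighbor is unique
        rcases (Relation.TransGen.tail'_iff).mp h with ⟨u, hLu, hux⟩
        have : w' = u := hone x h w' u hwx hux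
        subst this
        by_cases hwL : w' = L
        · exact Or.inl (hwL ▸ Relation.ReflTransGen.refl)
        · rcases hLu.cases_head with h' | ⟨c, hc, hc'⟩
          · exact absurd h'.symm hwL
          · exact Or.inr (Relation.TransGen.head' hc hc')
  -- pick a maximal in-neighbor of L
  have wf : WellFounded (flip (Relation.TransGen E)) := by
    have : IsIrrefl V (flip (Relation.TransGen E)) := ⟨fun a => hacyc a⟩
    have : IsTrans V (flip (Relation.TransGen E)) :=
      ⟨fun a b c h1 h2 => Relation.TransGen.trans h2 h1⟩
    exact Finite.wellFounded_of_trans_of_irrefl _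
  obtain ⟨v, hvL, hmax⟩ := wf.has_min {u : V | E u L} hin
  refine ⟨v, hvL, fun w hvw => ?_⟩
  by_contra hne
  rcases dich w with h | h
  · -- w reaches L; take the last edge u → L
    rcases h.cases_tail with h' | ⟨u, hwu, huL⟩
    · exact hne h'.symm
    · exact hmax u huL (Relation.TransGen.trans_left (Relation.TransGen.single hvw) hwu)
  · -- w is strictly after L
    rcases (Relation.TransGen.tail'_iff).mp h with ⟨u, hLu, huw⟩
    have : v = u := hone w h v u hvw huw
    subst this
    exact hacyc v (Relation.TransGen.head' hvL hLu)
end
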